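/- arXiv:1009.1438 — 3 statements merged into one kernel-verified Lean document; each statement's English description precedes it below -/
import Mathlib

section
/- Let G be a finite connected graph with unit resistances on the edges, and let x, y be two vertices with effective resistance R = R_eff(x ↔ y). Then for any ε > 0, the simple random walk started at x satisfies P_x(τ_y ≤ ε R²) ≤ ε. -/
/-!
Let `φ` be the voltage with `φ x = 0` and `φ y = R = R_eff(x ↔ y)`: the minimiser of the
Dirichlet energy among functions with boundary values `0, 1`, scaled by `R`. It is harmonic off
`{x, y}` and carries a unit current from `y` to `x`, so by current conservation every edge
satisfies `|φ u - φ w| ≤ 1`. Harmonicity removes the cross term in `E φ(X_1)²`, so one step of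
the walk raises `φ²` by at most `1` on average: `φ(X_(t ∧ τ_y))² - t ∧ τ_y` is a
supermartingale, whence `R² P_x(τ_y ≤ t) ≤ E_x φ(X_(t ∧ τ_y))² ≤ t`.
-/

open scoped BigOperators

namespace RW

attribute [local instance] Classical.propDecidable

variable {V : Type*}

/-- Degree of a vertex (as a natural number, via `Nat.card`). -/
noncomputable def deg (G : SimpleGraph V) (x : V) : ℕ := Nat.card (G.neighborSet x)

/-- Local finiteness of a graph. -/
def LocFin (G : SimpleGraph V) : Prop := ∀ x, (G.neighborSet x).Finite

/-- Probability of the simple random walk following the trajectory `p`. -/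
noncomputable def pathProb (G : SimpleGraph V) {t : ℕ} (p : Fin (t + 1) → V) : ℝ :=
  if ∀ i : Fin t, G.Adj (p i.castSucc) (p i.succ)
  then ∏ i : Fin t, ((deg G (p i.castSucc) : ℝ))⁻¹ else 0

/-- `hitProb G u v t` is the probability that the simple random walk started at `u`
hits `v` for the first time (at a time `≥ 1`) exactly at time `t`. -/
noncomputable def hitProb (G : SimpleGraph V) (u v : V) (t : ℕ) : ℝ :=
  ∑' p : Fin (t + 1) → V,
    if p 0 = u ∧ p (Fin.last t) = v ∧
        (∀ i : Fin (t + 1), i ≠ 0 → i ≠ Fin.last t → p i ≠ v)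
    then pathProb G p else 0

/-- `survProb G u v t` is the probability that the walk started at `u` has not
hit `v` before time `t`, i.e. `P_u(τ_v ≥ t)` (for `t ≥ 1`). -/
noncomputable def survProb (G : SimpleGraph V) (u v : V) (t : ℕ) : ℝ :=
  1 - ∑ s ∈ Finset.Ico 1 t, hitProb G u v s
/-- Dirichlet energy of a function on a finite graph with unit resistances. -/
noncomputable def energy {V : Type} [Fintype V] (G : SimpleGraph V) (f : V → ℝ) : ℝ :=
  (1 / 2) * ∑ u, ∑ w, if G.Adj u w then (f u - f w) ^ 2 else 0

/-- Effective conductance between `x` and `y` (Dirichlet variational principle). -/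
noncomputable def effCond {V : Type} [Fintype V] (G : SimpleGraph V) (x y : V) : ℝ :=
  sInf {e : ℝ | ∃ f : V → ℝ, f x = 0 ∧ f y = 1 ∧ e = energy G f}

/-- Effective resistance between `x` and `y`. -/
noncomputable def effRes {V : Type} [Fintype V] (G : SimpleGraph V) (x y : V) : ℝ :=
  (effCond G x y)⁻¹

section Potential

variable {V : Type} (G : SimpleGraph V)

noncomputable def grad (f : V → ℝ) (u w : V) : ℝ :=
  if G.Adj u w then f u - f w else 0

lemma grad_swap (f : V → ℝ) (u w : V) : grad G f w u = -grad G f u w := by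
  unfold grad
  rw [G.adj_comm]
  split_ifs <;> ring

lemma sum_sum_grad_eq_zero (f : V → ℝ) (S : Finset V) :
    ∑ u ∈ S, ∑ w ∈ S, grad G f u w = 0 := by
  have h : ∑ u ∈ S, ∑ w ∈ S, grad G f u w = ∑ u ∈ S, ∑ w ∈ S, -grad G f u w :=
    Finset.sum_comm.trans <|
      Finset.sum_congr rfl fun u _ => Finset.sum_congr rfl fun w _ => grad_swap G f u w
  simp only [Finset.sum_neg_distrib] at h
  linarith

variable [Fintype V]

noncomputable def laplacian (f : V → ℝ) (v : V) : ℝ :=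
  ∑ w, grad G f v w

lemma laplacian_smul (a : ℝ) (f : V → ℝ) (v : V) :
    laplacian G (a • f) v = a * laplacian G f v := by
  simp only [laplacian, Finset.mul_sum, grad, Pi.smul_apply, smul_eq_mul]
  congr! 1 with w
  split_ifs <;> ring

lemma sum_laplacian_eq_sum_grad_compl (f : V → ℝ) (S : Finset V) :
    ∑ u ∈ S, laplacian G f u = ∑ u ∈ S, ∑ w ∈ Sᶜ, grad G f u w := by
  simp only [laplacian, ← Finset.sum_add_sum_compl S (grad G f _), Finset.sum_add_distrib,
    sum_sum_grad_eq_zero, zero_add]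

lemma sum_laplacian (f : V → ℝ) : ∑ v, laplacian G f v = 0 := by
  simpa using sum_laplacian_eq_sum_grad_compl G f Finset.univ

lemma sum_mul_laplacian (f d : V → ℝ) :
    ∑ v, d v * laplacian G f v =
      (1 / 2) * ∑ u, ∑ w, if G.Adj u w then (f u - f w) * (d u - d w) else 0 := by
  have hswap : ∑ u, ∑ w, d w * grad G f u w = -∑ u, ∑ w, d u * grad G f u w := by
    rw [Finset.sum_comm, ← Finset.sum_neg_distrib]
    refine Finset.sum_congr rfl fun a _ => ?_
    rw [← Finset.sum_neg_distrib]
    refine Finset.sum_congr rfl fun b _ => ?_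
    rw [grad_swap, mul_neg]
  have hsplit : ∑ u, ∑ w, (if G.Adj u w then (f u - f w) * (d u - d w) else 0) =
      ∑ u, ∑ w, d u * grad G f u w - ∑ u, ∑ w, d w * grad G f u w := by
    simp only [← Finset.sum_sub_distrib, grad]
    congr! 2 with u _ w
    split_ifs <;> ring
  have hexpand : ∑ v, d v * laplacian G f v = ∑ u, ∑ w, d u * grad G f u w := by
    simp only [laplacian, Finset.mul_sum]
  rw [hexpand, hsplit, hswap]
  ring

lemma energy_eq_sum_mul_laplacian (f : V → ℝ) :
    energy G f = ∑ v, f v * laplacian G f v := by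
  rw [sum_mul_laplacian, energy]
  congr! 4
  ring

lemma energy_add_smul (f d : V → ℝ) (s : ℝ) :
    energy G (f + s • d) =
      energy G f + 2 * s * ∑ v, d v * laplacian G f v + s ^ 2 * energy G d := by
  simp only [sum_mul_laplacian, energy, Finset.mul_sum, ← Finset.sum_add_distrib]
  congr! 2 with u _ w
  split_ifs
  · simp only [Pi.add_apply, Pi.smul_apply, smul_eq_mul]
    ring
  · ring

lemma energy_nonneg (f : V → ℝ) : 0 ≤ energy G f := by
  unfold energy
  refine mul_nonneg (by norm_num) (Finset.sum_nonneg fun u _ => Finset.sum_nonneg fun w _ => ?_)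
  split_ifs <;> positivity

lemma continuous_energy : Continuous (energy G) := by
  unfold energy
  refine continuous_const.mul <|
    continuous_finsetSum _ fun u _ => continuous_finsetSum _ fun w _ => ?_
  split_ifs <;> fun_prop

lemma sq_sub_le_two_mul_energy (f : V → ℝ) {u w : V} (h : G.Adj u w) :
    (f u - f w) ^ 2 ≤ 2 * energy G f := by
  let e : V → V → ℝ := fun u w => if G.Adj u w then (f u - f w) ^ 2 else 0
  have he : ∀ u w, 0 ≤ e u w := fun u w => by dsimp only [e]; split_ifs <;> positivity
  calc (f u - f w) ^ 2 = e u w := by simp [e, h]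
    _ ≤ ∑ w', e u w' := Finset.single_le_sum (fun w' _ => he u w') (Finset.mem_univ w)
    _ ≤ ∑ u', ∑ w', e u' w' :=
      Finset.single_le_sum (f := fun u' => ∑ w', e u' w')
        (fun u' _ => Finset.sum_nonneg fun w' _ => he u' w') (Finset.mem_univ u)
    _ = 2 * energy G f := by simp only [energy, e]; ring

lemma abs_sub_le_length_mul_sqrt_energy (f : V → ℝ) {u v : V} (p : G.Walk u v) :
    |f u - f v| ≤ p.length * √(2 * energy G f) := by
  induction p with
  | nil => simp
  | @cons a b c hadj q ih =>
    have hstep : |f a - f b| ≤ √(2 * energy G f) :=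
      Real.abs_le_sqrt (sq_sub_le_two_mul_energy G f hadj)
    calc |f a - f c| ≤ |f a - f b| + |f b - f c| := abs_sub_le _ _ _
      _ ≤ (q.length + 1) * √(2 * energy G f) := by linarith
      _ = (SimpleGraph.Walk.cons hadj q).length * √(2 * energy G f) := by
        rw [SimpleGraph.Walk.length_cons, Nat.cast_succ]

lemma abs_sub_le_card_mul_sqrt_energy (hconn : G.Connected) (f : V → ℝ) (u v : V) :
    |f u - f v| ≤ Fintype.card V * √(2 * energy G f) := by
  obtain ⟨p⟩ := hconn.preconnected u v
  calc |f u - f v| ≤ (p.toPath : G.Walk u v).length * √(2 * energy G f) :=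
        abs_sub_le_length_mul_sqrt_energy G f _
    _ ≤ Fintype.card V * √(2 * energy G f) := by
        gcongr
        exact p.toPath.2.length_lt.le

theorem exists_isMinOn_energy (hconn : G.Connected) {x y : V} (hxy : x ≠ y) :
    ∃ g ∈ {f : V → ℝ | f x = 0 ∧ f y = 1}, IsMinOn (energy G) {f | f x = 0 ∧ f y = 1} g := by
  set A := {f : V → ℝ | f x = 0 ∧ f y = 1}
  set f₀ : V → ℝ := Pi.single y 1
  have hf₀ : f₀ ∈ A := by simp [A, f₀, hxy]
  set B := energy G f₀
  have hK : IsCompact (A ∩ {f | energy G f ≤ B}) := by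
    refine Metric.isCompact_of_isClosed_isBounded ?_ ?_
    · exact ((isClosed_eq (continuous_apply x) continuous_const).inter
        (isClosed_eq (continuous_apply y) continuous_const)).inter
        (isClosed_le (continuous_energy G) continuous_const)
    · refine (Metric.isBounded_iff_subset_closedBall 0).2 ⟨Fintype.card V * √(2 * B), ?_⟩
      rintro f ⟨⟨hfx, -⟩, hfB⟩
      rw [Metric.mem_closedBall, dist_zero_right]
      refine (pi_norm_le_iff_of_nonneg (by positivity)).2 fun v => ?_
      calc ‖f v‖ = |f x - f v| := by rw [hfx, zero_sub, abs_neg, Real.norm_eq_abs]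
        _ ≤ Fintype.card V * √(2 * energy G f) := abs_sub_le_card_mul_sqrt_energy G hconn f x v
        _ ≤ Fintype.card V * √(2 * B) := by gcongr; exact hfB
  obtain ⟨g, ⟨hgA, hgB⟩, hg⟩ :=
    hK.exists_isMinOn ⟨f₀, hf₀, le_refl B⟩ (continuous_energy G).continuousOn
  refine ⟨g, hgA, fun f hf => ?_⟩
  by_cases hfB : energy G f ≤ B
  · exact hg ⟨hf, hfB⟩
  · exact hgB.trans (le_of_not_ge hfB)

lemma effCond_eq_energy {x y : V} {g : V → ℝ} (hgA : g ∈ {f : V → ℝ | f x = 0 ∧ f y = 1})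
    (hg : IsMinOn (energy G) {f | f x = 0 ∧ f y = 1} g) : effCond G x y = energy G g := by
  refine IsLeast.csInf_eq ⟨⟨g, hgA.1, hgA.2, rfl⟩, ?_⟩
  rintro e ⟨f, hfx, hfy, rfl⟩
  exact hg ⟨hfx, hfy⟩

lemma laplacian_eq_zero_of_isMinOn {x y : V} {g : V → ℝ}
    (hgA : g ∈ {f : V → ℝ | f x = 0 ∧ f y = 1})
    (hg : IsMinOn (energy G) {f | f x = 0 ∧ f y = 1} g) {v : V} (hvx : v ≠ x) (hvy : v ≠ y) :
    laplacian G g v = 0 := by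
  set d : V → ℝ := Pi.single v 1
  have hd : ∑ w, d w * laplacian G g w = laplacian G g v := by simp [d, Pi.single_apply]
  have hquad (s : ℝ) : 0 ≤ energy G d * (s * s) + 2 * laplacian G g v * s + 0 := by
    have hmem : g + s • d ∈ {f : V → ℝ | f x = 0 ∧ f y = 1} := by
      simp [d, hgA.1, hgA.2, hvx.symm, hvy.symm]
    have : energy G g ≤ energy G (g + s • d) := hg hmem
    rw [energy_add_smul, hd] at this
    nlinarith
  have := discrim_le_zero hquad
  rw [discrim] at this
  nlinarith [sq_nonneg (laplacian G g v)]

lemma laplacian_eq_energy_of_isMinOn {x y : V} (hxy : x ≠ y) {g : V → ℝ}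
    (hgA : g ∈ {f : V → ℝ | f x = 0 ∧ f y = 1})
    (hg : IsMinOn (energy G) {f | f x = 0 ∧ f y = 1} g) :
    laplacian G g y = energy G g ∧ laplacian G g x = -energy G g := by
  have hharm (v : V) (hv : v ≠ x ∧ v ≠ y) : laplacian G g v = 0 :=
    laplacian_eq_zero_of_isMinOn G hgA hg hv.1 hv.2
  have hsum : laplacian G g x + laplacian G g y = 0 := by
    rw [← Fintype.sum_eq_add x y hxy hharm]
    exact sum_laplacian G g
  have hgreen : energy G g = laplacian G g y := by
    rw [energy_eq_sum_mul_laplacian, Fintype.sum_eq_add x y hxy fun v hv => by rw [hharm v hv,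
      mul_zero], hgA.1, hgA.2]
    ring
  constructor <;> linarith

/-- Current conservation: no edge carries more current than the total current `laplacian G f y`
injected at `y`. -/
lemma sub_le_laplacian_of_laplacian_nonpos {f : V → ℝ} {y : V}
    (h : ∀ v, v ≠ y → laplacian G f v ≤ 0) {u w : V} (huw : G.Adj u w) :
    f u - f w ≤ laplacian G f y := by
  have hy : 0 ≤ laplacian G f y := by
    have := sum_laplacian G f
    rw [← Finset.add_sum_erase _ _ (Finset.mem_univ y)] at this
    linarith [Finset.sum_nonpos (s := Finset.univ.erase y) fun v hv =>
      h v (Finset.ne_of_mem_erase hv)]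
  rcases le_or_gt (f u) (f w) with hle | hlt
  · linarith
  set S := Finset.univ.filter fun v => f u ≤ f v
  have hu : u ∈ S := by simp [S]
  have hw : w ∈ Sᶜ := by simpa [S] using hlt
  have hnn (v : V) (hv : v ∈ S) (z : V) (hz : z ∈ Sᶜ) : 0 ≤ grad G f v z := by
    simp only [S, Finset.mem_compl, Finset.mem_filter, Finset.mem_univ, true_and, not_le] at hv hz
    unfold grad
    split_ifs <;> linarith
  have hflow : f u - f w ≤ ∑ v ∈ S, ∑ z ∈ Sᶜ, grad G f v z :=
    calc f u - f w = grad G f u w := by simp [grad, huw]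
      _ ≤ ∑ z ∈ Sᶜ, grad G f u z := Finset.single_le_sum (hnn u hu) hw
      _ ≤ ∑ v ∈ S, ∑ z ∈ Sᶜ, grad G f v z :=
        Finset.single_le_sum (f := fun v => ∑ z ∈ Sᶜ, grad G f v z)
          (fun v hv => Finset.sum_nonneg (hnn v hv)) hu
  have hcut : ∑ v ∈ S, laplacian G f v ≤ laplacian G f y :=
    calc ∑ v ∈ S, laplacian G f v ≤ ∑ v ∈ S, if v = y then laplacian G f y else 0 := by
          refine Finset.sum_le_sum fun v _ => ?_
          split_ifs with hv
          · rw [hv]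
          · exact h v hv
      _ ≤ laplacian G f y := by
          rw [Finset.sum_ite_eq']
          split_ifs <;> linarith
  rw [sum_laplacian_eq_sum_grad_compl] at hcut
  linarith

theorem exists_lipschitz_potential (hconn : G.Connected) {x y : V} (hxy : x ≠ y) :
    ∃ φ : V → ℝ, φ x = 0 ∧ φ y = effRes G x y ∧ (∀ u, 0 ≤ φ u * laplacian G φ u) ∧
      ∀ u w, G.Adj u w → |φ u - φ w| ≤ 1 := by
  obtain ⟨g, hgA, hg⟩ := exists_isMinOn_energy G hconn hxy
  obtain ⟨hy, hx⟩ := laplacian_eq_energy_of_isMinOn G hxy hgA hg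
  have hharm {v : V} := laplacian_eq_zero_of_isMinOn G hgA hg (v := v)
  have hE := energy_nonneg G g
  have hR : effRes G x y = (energy G g)⁻¹ := by rw [effRes, effCond_eq_energy G hgA hg]
  have hmul (u : V) : 0 ≤ g u * laplacian G g u := by
    by_cases huy : u = y
    · rw [huy, hy, hgA.2, one_mul]
      exact hE
    by_cases hux : u = x
    · rw [hux, hgA.1, zero_mul]
    · rw [hharm hux huy, mul_zero]
  have hnonpos (v : V) (hvy : v ≠ y) : laplacian G g v ≤ 0 := by
    by_cases hvx : v = x
    · rw [hvx, hx]
      linarith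
    · rw [hharm hvx hvy]
  refine ⟨effRes G x y • g, by simp [hgA.1], by simp [hgA.2], fun u => ?_, fun u w huw => ?_⟩
  · rw [laplacian_smul, Pi.smul_apply, smul_eq_mul]
    nlinarith [mul_nonneg (sq_nonneg (effRes G x y)) (hmul u)]
  · have hgap : |g u - g w| ≤ energy G g := abs_sub_le_iff.2
      ⟨hy ▸ sub_le_laplacian_of_laplacian_nonpos G hnonpos huw,
        hy ▸ sub_le_laplacian_of_laplacian_nonpos G hnonpos huw.symm⟩
    simp only [Pi.smul_apply, smul_eq_mul, ← mul_sub, abs_mul, hR, abs_inv, abs_of_nonneg hE]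
    exact inv_mul_le_one_of_le₀ hgap hE

end Potential

section RandomWalk

variable {V : Type} (G : SimpleGraph V)

noncomputable def transProb (u v : V) : ℝ :=
  if G.Adj u v then (deg G u : ℝ)⁻¹ else 0

lemma pathProb_eq_prod {t : ℕ} (p : Fin (t + 1) → V) :
    pathProb G p = ∏ i : Fin t, transProb G (p i.castSucc) (p i.succ) := by
  unfold pathProb
  split_ifs with h
  · exact Finset.prod_congr rfl fun i _ => (if_pos (h i)).symm
  · obtain ⟨i, hi⟩ := not_forall.1 h
    exact (Finset.prod_eq_zero (Finset.mem_univ i) (if_neg hi)).symm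

lemma pathProb_nonneg {t : ℕ} (p : Fin (t + 1) → V) : 0 ≤ pathProb G p := by
  rw [pathProb_eq_prod]
  refine Finset.prod_nonneg fun i _ => ?_
  unfold transProb
  split_ifs <;> positivity

lemma pathProb_snoc {t : ℕ} (q : Fin (t + 1) → V) (z : V) :
    pathProb G (Fin.snoc q z : Fin (t + 2) → V) =
      pathProb G q * transProb G (q (Fin.last t)) z := by
  simp only [pathProb_eq_prod, Fin.prod_univ_castSucc, Fin.snoc_castSucc, Fin.succ_last,
    Fin.snoc_last, ← Fin.castSucc_succ]

lemma hitProb_nonneg (x y : V) (t : ℕ) : 0 ≤ hitProb G x y t :=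
  tsum_nonneg fun p => by
    split_ifs
    exacts [pathProb_nonneg G p, le_rfl]

def Avoids (x y : V) {t : ℕ} (p : Fin (t + 1) → V) : Prop :=
  p 0 = x ∧ ∀ i, i ≠ 0 → p i ≠ y

lemma avoids_snoc_iff {x y : V} {t : ℕ} (q : Fin (t + 1) → V) (z : V) :
    Avoids x y (Fin.snoc q z : Fin (t + 2) → V) ↔ Avoids x y q ∧ z ≠ y := by
  simp [Avoids, Fin.forall_fin_succ', and_assoc]

variable [Fintype V]

lemma natCast_deg_eq_sum (u : V) : (deg G u : ℝ) = ∑ v, if G.Adj u v then 1 else 0 := by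
  rw [Finset.sum_boole, deg, Nat.card_coe_set_eq, Set.ncard_eq_toFinset_card']
  congr 2
  ext v
  simp

lemma sum_transProb_mul (u : V) (c : V → ℝ) :
    ∑ v, transProb G u v * c v = (deg G u : ℝ)⁻¹ * ∑ v, if G.Adj u v then c v else 0 := by
  rw [Finset.mul_sum]
  refine Finset.sum_congr rfl fun v _ => ?_
  unfold transProb
  split_ifs <;> ring

lemma sum_transProb_le_one (u : V) : ∑ v, transProb G u v ≤ 1 := by
  have h := sum_transProb_mul G u 1
  simp only [Pi.one_apply, mul_one] at h
  rw [h, ← natCast_deg_eq_sum]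
  exact inv_mul_le_one

lemma sum_transProb_mul_sq_le {φ : V → ℝ} {u : V} (hu : 0 ≤ φ u * laplacian G φ u)
    (hlip : ∀ w, G.Adj u w → |φ u - φ w| ≤ 1) :
    ∑ v, transProb G u v * φ v ^ 2 ≤ φ u ^ 2 + 1 := by
  have hpt (v : V) : (if G.Adj u v then φ v ^ 2 else 0) ≤
      (φ u ^ 2 + 1) * (if G.Adj u v then 1 else 0) - 2 * φ u * grad G φ u v := by
    unfold grad
    split_ifs with h
    · nlinarith [(sq_le_one_iff_abs_le_one _).2 (hlip v h)]
    · simp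
  have hsum : ∑ v, (if G.Adj u v then φ v ^ 2 else 0) ≤
      (φ u ^ 2 + 1) * deg G u - 2 * φ u * laplacian G φ u := by
    refine (Finset.sum_le_sum fun v _ => hpt v).trans_eq ?_
    rw [Finset.sum_sub_distrib, ← Finset.mul_sum, ← Finset.mul_sum, ← natCast_deg_eq_sum]
    rfl
  rw [sum_transProb_mul]
  calc (deg G u : ℝ)⁻¹ * ∑ v, (if G.Adj u v then φ v ^ 2 else 0)
      ≤ (deg G u : ℝ)⁻¹ * ((φ u ^ 2 + 1) * deg G u) := by gcongr; linarith
    _ = (φ u ^ 2 + 1) * ((deg G u : ℝ)⁻¹ * deg G u) := by ring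
    _ ≤ φ u ^ 2 + 1 := mul_le_of_le_one_right (by positivity) inv_mul_le_one

lemma sum_snoc {t : ℕ} (F : (Fin (t + 2) → V) → ℝ) :
    ∑ p, F p = ∑ q : Fin (t + 1) → V, ∑ z, F (Fin.snoc q z) := by
  rw [← (Fin.snocEquiv fun _ => V).sum_comp, Fintype.sum_prod_type, Finset.sum_comm]
  rfl

/-- `killedExpect G x y t c` is `E_x[c(X_t); τ_y > t]`. -/
noncomputable def killedExpect (x y : V) (t : ℕ) (c : V → ℝ) : ℝ :=
  ∑ p : Fin (t + 1) → V, if Avoids x y p then pathProb G p * c (p (Fin.last t)) else 0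

lemma killedExpect_zero (x y : V) (c : V → ℝ) : killedExpect G x y 0 c = c x := by
  rw [killedExpect, ← (Equiv.funUnique (Fin 1) V).symm.sum_comp]
  simp [Avoids, pathProb_eq_prod]

lemma killedExpect_mono {x y : V} {t : ℕ} {c c' : V → ℝ} (h : ∀ v, c v ≤ c' v) :
    killedExpect G x y t c ≤ killedExpect G x y t c' :=
  Finset.sum_le_sum fun p _ => by
    split_ifs
    exacts [mul_le_mul_of_nonneg_left (h _) (pathProb_nonneg G p), le_rfl]

lemma killedExpect_nonneg {x y : V} {t : ℕ} {c : V → ℝ} (h : ∀ v, 0 ≤ c v) :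
    0 ≤ killedExpect G x y t c :=
  Finset.sum_nonneg fun p _ => by
    split_ifs
    exacts [mul_nonneg (pathProb_nonneg G p) (h _), le_rfl]

lemma killedExpect_add (x y : V) (t : ℕ) (c c' : V → ℝ) :
    killedExpect G x y t (fun v => c v + c' v) =
      killedExpect G x y t c + killedExpect G x y t c' := by
  simp only [killedExpect, ← Finset.sum_add_distrib]
  refine Finset.sum_congr rfl fun p _ => ?_
  split_ifs <;> ring

/-- Markov property at time `t + 1`, split according to whether `X_(t+1) = y`. -/
lemma mul_hitProb_succ_add_killedExpect_succ (x y : V) (t : ℕ) (c : V → ℝ) :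
    c y * hitProb G x y (t + 1) + killedExpect G x y (t + 1) c =
      killedExpect G x y t (fun u => ∑ v, transProb G u v * c v) := by
  have hhit (q : Fin (t + 1) → V) (z : V) :
      ((Fin.snoc q z : Fin (t + 2) → V) 0 = x ∧
        (Fin.snoc q z : Fin (t + 2) → V) (Fin.last _) = y ∧
        ∀ i, i ≠ 0 → i ≠ Fin.last _ → (Fin.snoc q z : Fin (t + 2) → V) i ≠ y) ↔
        Avoids x y q ∧ z = y := by
    simp [Avoids, Fin.forall_fin_succ', Fin.castSucc_ne_last]
    tauto
  rw [hitProb, tsum_fintype, killedExpect, killedExpect, Finset.mul_sum, sum_snoc, sum_snoc,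
    ← Finset.sum_add_distrib]
  refine Finset.sum_congr rfl fun q _ => ?_
  simp only [hhit]
  simp only [avoids_snoc_iff, Fin.snoc_last, pathProb_snoc]
  by_cases hq : Avoids x y q
  · simp only [hq, true_and, if_true, Finset.mul_sum, ← Finset.sum_add_distrib]
    refine Finset.sum_congr rfl fun z _ => ?_
    by_cases hz : z = y <;> simp [hz] <;> ring
  · simp [hq]

lemma killedExpect_one_le (x y : V) (t : ℕ) : killedExpect G x y t 1 ≤ 1 := by
  induction t with
  | zero => simp [killedExpect_zero]
  | succ t ih =>
    have hMarkov := mul_hitProb_succ_add_killedExpect_succ G x y t 1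
    have hsub : killedExpect G x y t (fun u => ∑ v, transProb G u v * (1 : V → ℝ) v) ≤
        killedExpect G x y t 1 :=
      killedExpect_mono G fun u => by simpa using sum_transProb_le_one G u
    simp only [Pi.one_apply, one_mul, mul_one] at hMarkov hsub
    linarith [hitProb_nonneg G x y (t + 1)]

/-- Optional stopping for the supermartingale `φ(X_(t ∧ τ_y))² - t ∧ τ_y`. -/
theorem sq_mul_sum_hitProb_add_killedExpect_le {x y : V} {φ : V → ℝ} (hφx : φ x = 0)
    (hstep : ∀ u, ∑ v, transProb G u v * φ v ^ 2 ≤ φ u ^ 2 + 1) (t : ℕ) :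
    φ y ^ 2 * ∑ s ∈ Finset.Icc 1 t, hitProb G x y s + killedExpect G x y t (fun v => φ v ^ 2)
      ≤ t := by
  induction t with
  | zero => simp [killedExpect_zero, hφx]
  | succ t ih =>
    have hMarkov := mul_hitProb_succ_add_killedExpect_succ G x y t fun v => φ v ^ 2
    have hdrift := (killedExpect_mono G (x := x) (y := y) (t := t) hstep).trans_eq
      (killedExpect_add G x y t (fun u => φ u ^ 2) 1)
    rw [Finset.sum_Icc_succ_top (by omega), mul_add]
    push_cast
    linarith [killedExpect_one_le G x y t]

end RandomWalk

/-- Lemma 2.1: on a finite graph, `P_x(τ_y ≤ ε R_eff(x ↔ y)²) ≤ ε`. -/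
theorem hitting_time_resistance_lower {V : Type} [Fintype V] (G : SimpleGraph V)
    (hconn : G.Connected) (x y : V) (hxy : x ≠ y) (ε : ℝ) (hε : 0 < ε) :
    ∀ t : ℕ, (t : ℝ) ≤ ε * (effRes G x y) ^ 2 →
      ∑ s ∈ Finset.Icc 1 t, hitProb G x y s ≤ ε := by
  intro t ht
  obtain ⟨φ, hφx, hφy, hφlap, hφlip⟩ := exists_lipschitz_potential G hconn hxy
  have hbound := sq_mul_sum_hitProb_add_killedExpect_le G (y := y) hφx
    (fun u => sum_transProb_mul_sq_le G (hφlap u) (hφlip u)) t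
  have hkilled := killedExpect_nonneg G (x := x) (y := y) (t := t) fun v => sq_nonneg (φ v)
  rw [hφy] at hbound
  rcases (sq_nonneg (effRes G x y)).eq_or_lt with hR | hR
  · have ht0 : (t : ℝ) ≤ 0 := by simpa [← hR] using ht
    simp [Nat.cast_nonpos.1 ht0, hε.le]
  · exact le_of_mul_le_mul_left (by linarith) hR

end RW
end

section
/- For the simple random walk on an infinite connected locally finite graph started at v, for every t ≥ 3 one has P_v(τ_v = t) ≤ P_v(τ_v = t − 1) whenever t is odd. -/
open scoped BigOperators

namespace RW

attribute [local instance] Classical.propDecidable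

variable {V : Type*}

/-!
Write `T` for the simple random walk killed at `v`, acting on measures by
`(T f) b = ∑ a, f a * 𝟙[a ~ b, a ≠ v, b ≠ v] / deg a`, let `f₀ = 𝟙[v ~ ·]` and
`⟨f, g⟩ = ∑ a, f a * g a / deg a`. Splitting off the first and the last step of an excursion,
`deg v * P_v(τ_v = m + 2) = ⟨T^m f₀, f₀⟩`. Detailed balance makes `T` self-adjoint for `⟨·, ·⟩`,
and since `T` is substochastic, `⟨T f, f⟩ ≤ ⟨f, f⟩` (Schur test). Hence for `t = 2k + 3`,
`deg v * P_v(τ_v = t) = ⟨T (T^k f₀), T^k f₀⟩ ≤ ⟨T^k f₀, T^k f₀⟩ = deg v * P_v(τ_v = t - 1)`.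
All sums are taken in `ℝ≥0∞`, where no summability has to be checked.
-/

open scoped ENNReal NNReal

noncomputable def push (P : V → V → ℝ≥0∞) (f : V → ℝ≥0∞) (b : V) : ℝ≥0∞ := ∑' a, f a * P a b

noncomputable def wInner (w f g : V → ℝ≥0∞) : ℝ≥0∞ := ∑' a, f a * w a * g a

theorem tsum_path_eq_tsum_iterate_push (P : V → V → ℝ≥0∞) (n : ℕ) (g h : V → ℝ≥0∞) :
    ∑' q : Fin (n + 1) → V, g (q 0) * (∏ i : Fin n, P (q i.castSucc) (q i.succ)) *
      h (q (Fin.last n)) = ∑' a, (push P)^[n] g a * h a := by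
  induction n generalizing h with
  | zero =>
    rw [← (Equiv.funUnique (Fin 1) V).symm.tsum_eq]
    simp
  | succ n ih =>
    rw [← (Fin.snocEquiv fun _ => V).tsum_eq, ENNReal.tsum_prod', ENNReal.tsum_comm]
    simp only [Fin.snocEquiv_apply, Fin.prod_univ_castSucc, Fin.succ_castSucc, Fin.snoc_castSucc,
      Fin.snoc_last, Fin.succ_last, Fin.snoc_apply_zero]
    calc _ = ∑' q : Fin (n + 1) → V, g (q 0) * (∏ i : Fin n, P (q i.castSucc) (q i.succ)) *
          (∑' b, P (q (Fin.last n)) b * h b) := by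
          refine tsum_congr fun q => ?_
          rw [← ENNReal.tsum_mul_left]
          exact tsum_congr fun b => by ring
      _ = _ := by
        rw [ih fun a => ∑' b, P a b * h b, Function.iterate_succ_apply']
        simp only [push, ← ENNReal.tsum_mul_left, ← ENNReal.tsum_mul_right]
        rw [ENNReal.tsum_comm]
        exact tsum_congr fun b => tsum_congr fun a => by ring

theorem _root_.ENNReal.two_mul_le_add_sq (x y : ℝ≥0∞) : 2 * x * y ≤ x ^ 2 + y ^ 2 := by
  rcases eq_or_ne x ⊤ with rfl | hx
  · simp
  rcases eq_or_ne y ⊤ with rfl | hy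
  · simp
  lift x to ℝ≥0 using hx
  lift y to ℝ≥0 using hy
  exact_mod_cast _root_.two_mul_le_add_sq x y

theorem tsum_push_le {P : V → V → ℝ≥0∞} (hP : ∀ a, ∑' b, P a b ≤ 1) (f : V → ℝ≥0∞) :
    ∑' b, push P f b ≤ ∑' a, f a := by
  calc ∑' b, push P f b = ∑' a, f a * ∑' b, P a b := by
        simp only [push, ← ENNReal.tsum_mul_left]
        exact ENNReal.tsum_comm
    _ ≤ ∑' a, f a := ENNReal.tsum_le_tsum fun a => mul_le_of_le_one_right' (hP a)

theorem tsum_iterate_push_le {P : V → V → ℝ≥0∞} (hP : ∀ a, ∑' b, P a b ≤ 1) (n : ℕ)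
    (f : V → ℝ≥0∞) : ∑' b, (push P)^[n] f b ≤ ∑' a, f a := by
  induction n with
  | zero => rfl
  | succ n ih =>
    rw [Function.iterate_succ_apply']
    exact (tsum_push_le hP _).trans ih

section Symmetric

variable {S : Matrix V V ℝ≥0∞}

theorem tsum_tsum_mul_le_of_isSymm (hS : S.IsSymm) (x : V → ℝ≥0∞) :
    ∑' a, ∑' b, x a * S a b * x b ≤ ∑' a, x a ^ 2 * ∑' b, S a b := by
  have hrow : ∑' a, ∑' b, S a b * x a ^ 2 = ∑' a, x a ^ 2 * ∑' b, S a b := by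
    simp only [← ENNReal.tsum_mul_left, mul_comm]
  have hcol : ∑' a, ∑' b, S a b * x b ^ 2 = ∑' a, x a ^ 2 * ∑' b, S a b := by
    rw [ENNReal.tsum_comm, ← hrow]
    simp only [hS.apply]
  refine (ENNReal.mul_le_mul_iff_right two_ne_zero ENNReal.ofNat_ne_top).mp ?_
  calc 2 * ∑' a, ∑' b, x a * S a b * x b = ∑' a, ∑' b, S a b * (2 * x a * x b) := by
        simp only [← ENNReal.tsum_mul_left]
        exact tsum_congr fun a => tsum_congr fun b => by ring
    _ ≤ ∑' a, ∑' b, (S a b * x a ^ 2 + S a b * x b ^ 2) := by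
        gcongr with a b
        rw [← mul_add]
        gcongr
        exact ENNReal.two_mul_le_add_sq _ _
    _ = 2 * ∑' a, x a ^ 2 * ∑' b, S a b := by
        simp only [ENNReal.tsum_add, hrow, hcol, two_mul]

variable {w : V → ℝ≥0∞} {P : V → V → ℝ≥0∞}

theorem wInner_push_comm (hS : S.IsSymm) (hP : ∀ a b, P a b = w a * S a b) (f g : V → ℝ≥0∞) :
    wInner w (push P f) g = wInner w f (push P g) := by
  simp only [wInner, push, hP, ← ENNReal.tsum_mul_left, ← ENNReal.tsum_mul_right]
  rw [ENNReal.tsum_comm]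
  refine tsum_congr fun a => tsum_congr fun b => ?_
  rw [hS.apply]
  ring

theorem wInner_iterate_push_comm (hS : S.IsSymm) (hP : ∀ a b, P a b = w a * S a b) (n : ℕ)
    (f g : V → ℝ≥0∞) : wInner w ((push P)^[n] f) g = wInner w f ((push P)^[n] g) := by
  induction n generalizing g with
  | zero => rfl
  | succ n ih =>
    rw [Function.iterate_succ_apply', wInner_push_comm hS hP, ih, Function.iterate_succ_apply]

theorem wInner_iterate_push_add (hS : S.IsSymm) (hP : ∀ a b, P a b = w a * S a b) (m n : ℕ)
    (f g : V → ℝ≥0∞) :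
    wInner w ((push P)^[m + n] f) g = wInner w ((push P)^[n] f) ((push P)^[m] g) := by
  rw [Function.iterate_add_apply, wInner_iterate_push_comm hS hP]

theorem wInner_push_self_le (hS : S.IsSymm) (hP : ∀ a b, P a b = w a * S a b)
    (hw : ∀ a, w a * ∑' b, S a b ≤ 1) (f : V → ℝ≥0∞) : wInner w (push P f) f ≤ wInner w f f := by
  calc wInner w (push P f) f = ∑' a, ∑' b, (w a * f a) * S a b * (w b * f b) := by
        simp only [wInner, push, hP, ← ENNReal.tsum_mul_right]
        rw [ENNReal.tsum_comm]
        exact tsum_congr fun a => tsum_congr fun b => by ring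
    _ ≤ ∑' a, (w a * f a) ^ 2 * ∑' b, S a b := tsum_tsum_mul_le_of_isSymm hS _
    _ = ∑' a, f a * w a * f a * (w a * ∑' b, S a b) := tsum_congr fun a => by ring
    _ ≤ wInner w f f := ENNReal.tsum_le_tsum fun a => mul_le_of_le_one_right' (hw a)

end Symmetric

theorem prod_path_cons {M : Type*} [CommMonoid M] {n : ℕ} (f : V → V → M) (a : V)
    (r : Fin (n + 1) → V) :
    ∏ i : Fin (n + 1), f ((Fin.cons a r : Fin (n + 2) → V) i.castSucc)
      ((Fin.cons a r : Fin (n + 2) → V) i.succ) =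
      f a (r 0) * ∏ i : Fin n, f (r i.castSucc) (r i.succ) := by
  rw [Fin.prod_univ_succ]
  simp only [Fin.castSucc_zero, Fin.cons_zero, Fin.cons_succ, Fin.castSucc_succ]

theorem prod_path_snoc {M : Type*} [CommMonoid M] {n : ℕ} (f : V → V → M)
    (q : Fin (n + 1) → V) (b : V) :
    ∏ i : Fin (n + 1), f ((Fin.snoc q b : Fin (n + 2) → V) i.castSucc)
      ((Fin.snoc q b : Fin (n + 2) → V) i.succ) =
      (∏ i : Fin n, f (q i.castSucc) (q i.succ)) * f (q (Fin.last n)) b := by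
  rw [Fin.prod_univ_castSucc]
  simp only [Fin.snoc_castSucc, Fin.succ_last, Fin.snoc_last, Fin.succ_castSucc]

theorem tsum_eq_tsum_cons_snoc {α : Type*} [AddCommMonoid α] [TopologicalSpace α] {n : ℕ}
    {a b : V} (F : (Fin (n + 3) → V) → α)
    (hF : ∀ p, F p ≠ 0 → p 0 = a ∧ p (Fin.last _) = b) :
    ∑' p, F p = ∑' q : Fin (n + 1) → V, F (Fin.cons a (Fin.snoc q b)) := by
  refine (Function.Injective.tsum_eq ?_ fun p hp => ?_).symm
  · exact (Fin.cons_right_injective (α := fun _ => V) a).comp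
      (Fin.snoc_left_injective (α := fun _ => V) b)
  · obtain ⟨h0, hlast⟩ := hF p hp
    refine ⟨Fin.init (Fin.tail p), ?_⟩
    rw [← h0, ← hlast]
    exact (congrArg _ (Fin.snoc_init_self (Fin.tail p))).trans (Fin.cons_self_tail p)

variable {G : SimpleGraph V}

theorem deg_pos_of_adj (hloc : LocFin G) {a b : V} (h : G.Adj a b) : 0 < deg G a := by
  have := (hloc a).to_subtype
  have : Nonempty (G.neighborSet a) := ⟨⟨b, h⟩⟩
  exact Nat.card_pos

theorem tsum_adjMatrix_le_deg (hloc : LocFin G) {H : SimpleGraph V} (hH : H ≤ G) (a : V) :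
    ∑' b, H.adjMatrix ℝ≥0∞ a b ≤ deg G a := by
  calc ∑' b, H.adjMatrix ℝ≥0∞ a b ≤ ∑' b, (G.neighborSet a).indicator 1 b :=
        ENNReal.tsum_le_tsum fun b => by
          by_cases h : H.Adj a b
          · simp [h, hH h]
          · simp [h]
    _ = deg G a := by
        rw [← tsum_subtype, Pi.one_def, ENNReal.tsum_set_one, deg, Nat.card_coe_set_eq,
          ← (hloc a).cast_ncard_eq, ENat.toENNReal_coe]

theorem inv_deg_mul_tsum_adjMatrix_le_one (hloc : LocFin G) {H : SimpleGraph V} (hH : H ≤ G)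
    (a : V) : (deg G a : ℝ≥0∞)⁻¹ * ∑' b, H.adjMatrix ℝ≥0∞ a b ≤ 1 :=
  calc (deg G a : ℝ≥0∞)⁻¹ * ∑' b, H.adjMatrix ℝ≥0∞ a b ≤ (deg G a : ℝ≥0∞)⁻¹ * deg G a := by
        gcongr
        exact tsum_adjMatrix_le_deg hloc hH a
    _ ≤ 1 := ENNReal.inv_mul_le_one _

-- The walk on `G` using only the edges of `H ≤ G`; `H = G.deleteIncidenceSet v` kills it at `v`.
noncomputable def walkKernel (G H : SimpleGraph V) (a b : V) : ℝ≥0∞ :=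
  (deg G a : ℝ≥0∞)⁻¹ * H.adjMatrix ℝ≥0∞ a b

noncomputable def excursionWeight (G : SimpleGraph V) (v : V) {t : ℕ} (p : Fin (t + 1) → V) :
    ℝ≥0∞ :=
  if p 0 = v ∧ p (Fin.last t) = v ∧ (∀ i : Fin (t + 1), i ≠ 0 → i ≠ Fin.last t → p i ≠ v)
  then ∏ i : Fin t, walkKernel G G (p i.castSucc) (p i.succ) else 0

noncomputable def returnWeight (G : SimpleGraph V) (v : V) (t : ℕ) : ℝ≥0∞ :=
  ∑' p : Fin (t + 1) → V, excursionWeight G v p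

theorem tsum_walkKernel_le_one (hloc : LocFin G) {H : SimpleGraph V} (hH : H ≤ G) (a : V) :
    ∑' b, walkKernel G H a b ≤ 1 := by
  simp only [walkKernel, ENNReal.tsum_mul_left]
  exact inv_deg_mul_tsum_adjMatrix_le_one hloc hH a

theorem walkKernel_ne_top (hloc : LocFin G) (a b : V) : walkKernel G G a b ≠ ⊤ := by
  by_cases h : G.Adj a b
  · simp [walkKernel, h, (deg_pos_of_adj hloc h).ne']
  · simp [walkKernel, h]

theorem pathProb_eq_toReal {t : ℕ} (p : Fin (t + 1) → V) :
    pathProb G p = (∏ i : Fin t, walkKernel G G (p i.castSucc) (p i.succ)).toReal := by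
  rw [pathProb, ENNReal.toReal_prod]
  split_ifs with h
  · exact Finset.prod_congr rfl fun i _ => by simp [walkKernel, h i]
  · obtain ⟨i, hi⟩ := not_forall.mp h
    exact (Finset.prod_eq_zero (Finset.mem_univ i) (by simp [walkKernel, hi])).symm

theorem hitProb_self_eq_toReal (hloc : LocFin G) (v : V) (t : ℕ) :
    hitProb G v v t = (returnWeight G v t).toReal := by
  rw [returnWeight, ENNReal.tsum_toReal_eq]
  · refine tsum_congr fun p => ?_
    unfold excursionWeight
    split_ifs
    · exact pathProb_eq_toReal p
    · rfl
  · intro p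
    unfold excursionWeight
    split_ifs
    · exact ENNReal.prod_ne_top fun i _ => walkKernel_ne_top hloc _ _
    · exact ENNReal.zero_ne_top

theorem returnWeight_le_one (hloc : LocFin G) (v : V) (t : ℕ) : returnWeight G v t ≤ 1 :=
  calc returnWeight G v t
      ≤ ∑' p : Fin (t + 1) → V, (Pi.single v 1 : V → ℝ≥0∞) (p 0) *
          (∏ i : Fin t, walkKernel G G (p i.castSucc) (p i.succ)) * 1 :=
        ENNReal.tsum_le_tsum fun p => by
          unfold excursionWeight
          split_ifs with h
          · simp [h.1]
          · exact bot_le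
    _ = ∑' a, (push (walkKernel G G))^[t] (Pi.single v 1) a * 1 :=
        tsum_path_eq_tsum_iterate_push _ t _ fun _ => 1
    _ ≤ ∑' a, (Pi.single v 1 : V → ℝ≥0∞) a := by
        simpa only [mul_one] using tsum_iterate_push_le (tsum_walkKernel_le_one hloc le_rfl) t _
    _ = 1 := tsum_pi_single v 1

theorem excursionWeight_cons_snoc (v : V) {m : ℕ} (q : Fin (m + 1) → V) :
    excursionWeight G v (Fin.cons v (Fin.snoc q v) : Fin (m + 3) → V) =
      (deg G v : ℝ≥0∞)⁻¹ * (G.adjMatrix ℝ≥0∞ v (q 0) *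
        (∏ i : Fin m, walkKernel G (G.deleteIncidenceSet v) (q i.castSucc) (q i.succ)) *
        ((deg G (q (Fin.last m)) : ℝ≥0∞)⁻¹ * G.adjMatrix ℝ≥0∞ v (q (Fin.last m)))) := by
  set p : Fin (m + 3) → V := Fin.cons v (Fin.snoc q v)
  have hcond : (p 0 = v ∧ p (Fin.last _) = v ∧ (∀ i, i ≠ 0 → i ≠ Fin.last _ → p i ≠ v)) ↔
      ∀ r, q r ≠ v := by
    constructor
    · rintro ⟨-, -, h⟩ r
      have := h r.castSucc.succ (Fin.succ_ne_zero _)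
        (by rw [← Fin.succ_last, Ne, Fin.succ_inj]; exact (Fin.castSucc_lt_last r).ne)
      simpa [p] using this
    · intro h
      refine ⟨rfl, by simp [p], fun i hi0 hil => ?_⟩
      obtain ⟨j, rfl⟩ := Fin.exists_succ_eq.mpr hi0
      obtain ⟨r, rfl⟩ := Fin.exists_castSucc_eq.mpr fun hj : j = Fin.last _ =>
        hil (by rw [hj, Fin.succ_last])
      simpa [p] using h r
  have hprod : ∏ i : Fin (m + 2), walkKernel G G (p i.castSucc) (p i.succ) =
      walkKernel G G v (q 0) * (∏ i : Fin m, walkKernel G G (q i.castSucc) (q i.succ)) *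
        walkKernel G G (q (Fin.last m)) v := by
    rw [prod_path_cons, prod_path_snoc, Fin.snoc_apply_zero, mul_assoc]
  rw [excursionWeight]
  by_cases h : ∀ r, q r ≠ v
  · rw [if_pos (hcond.2 h), hprod]
    have hkill : ∀ i : Fin m, walkKernel G (G.deleteIncidenceSet v) (q i.castSucc) (q i.succ) =
        walkKernel G G (q i.castSucc) (q i.succ) := fun i => by
      simp [walkKernel, SimpleGraph.deleteIncidenceSet_adj, h]
    rw [Finset.prod_congr rfl fun i _ => hkill i]
    simp only [walkKernel, SimpleGraph.adjMatrix_apply, G.adj_comm (q (Fin.last m)) v]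
    ring
  · rw [if_neg (mt hcond.1 h)]
    obtain ⟨r, hr⟩ := not_forall_not.mp h
    cases r using Fin.cases with
    | zero => simp [hr]
    | succ i =>
      rw [Finset.prod_eq_zero (Finset.mem_univ i)
        (by simp [walkKernel, SimpleGraph.deleteIncidenceSet_adj, hr])]
      simp

theorem returnWeight_add_two (v : V) (m : ℕ) :
    returnWeight G v (m + 2) = (deg G v : ℝ≥0∞)⁻¹ *
      wInner (fun a => (deg G a : ℝ≥0∞)⁻¹)
        ((push (walkKernel G (G.deleteIncidenceSet v)))^[m] (G.adjMatrix ℝ≥0∞ v))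
        (G.adjMatrix ℝ≥0∞ v) := by
  have hends : ∀ p : Fin (m + 3) → V, excursionWeight G v p ≠ 0 →
      p 0 = v ∧ p (Fin.last _) = v := fun p hp => by
    by_contra h
    exact hp (if_neg fun hc => h ⟨hc.1, hc.2.1⟩)
  rw [returnWeight, tsum_eq_tsum_cons_snoc _ hends]
  simp only [excursionWeight_cons_snoc, ENNReal.tsum_mul_left, wInner, mul_assoc]
  rw [← tsum_path_eq_tsum_iterate_push _ m _ fun a => (deg G a : ℝ≥0∞)⁻¹ * G.adjMatrix ℝ≥0∞ v a]
  simp only [mul_assoc]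

theorem wInner_iterate_push_walkKernel_add (H : SimpleGraph V) (m n : ℕ) (f g : V → ℝ≥0∞) :
    wInner (fun a => (deg G a : ℝ≥0∞)⁻¹) ((push (walkKernel G H))^[m + n] f) g =
      wInner (fun a => (deg G a : ℝ≥0∞)⁻¹) ((push (walkKernel G H))^[n] f)
        ((push (walkKernel G H))^[m] g) :=
  wInner_iterate_push_add H.isSymm_adjMatrix (fun _ _ => rfl) m n f g

theorem wInner_push_walkKernel_self_le (hloc : LocFin G) {H : SimpleGraph V} (hH : H ≤ G)
    (f : V → ℝ≥0∞) :
    wInner (fun a => (deg G a : ℝ≥0∞)⁻¹) (push (walkKernel G H) f) f ≤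
      wInner (fun a => (deg G a : ℝ≥0∞)⁻¹) f f :=
  wInner_push_self_le H.isSymm_adjMatrix (fun _ _ => rfl)
    (inv_deg_mul_tsum_adjMatrix_le_one hloc hH) f

theorem returnWeight_odd_le_even (hloc : LocFin G) (v : V) (k : ℕ) :
    returnWeight G v (2 * k + 3) ≤ returnWeight G v (2 * k + 2) := by
  rw [show 2 * k + 3 = (2 * k + 1) + 2 by ring, returnWeight_add_two, returnWeight_add_two]
  gcongr _ * ?_
  set T := push (walkKernel G (G.deleteIncidenceSet v))
  calc wInner _ (T^[2 * k + 1] (G.adjMatrix ℝ≥0∞ v)) (G.adjMatrix ℝ≥0∞ v)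
      = wInner _ (T (T^[k] (G.adjMatrix ℝ≥0∞ v))) (T^[k] (G.adjMatrix ℝ≥0∞ v)) := by
        rw [show 2 * k + 1 = k + (k + 1) by ring, wInner_iterate_push_walkKernel_add,
          Function.iterate_succ_apply']
    _ ≤ wInner _ (T^[k] (G.adjMatrix ℝ≥0∞ v)) (T^[k] (G.adjMatrix ℝ≥0∞ v)) :=
        wInner_push_walkKernel_self_le hloc (G.deleteIncidenceSet_le v) _
    _ = wInner _ (T^[2 * k] (G.adjMatrix ℝ≥0∞ v)) (G.adjMatrix ℝ≥0∞ v) := by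
        rw [two_mul, wInner_iterate_push_walkKernel_add]

theorem odd_return_prob_le_even_general {V : Type} (G : SimpleGraph V) (hloc : LocFin G) (v : V) :
    ∀ t : ℕ, 3 ≤ t → Odd t → hitProb G v v t ≤ hitProb G v v (t - 1) := by
  rintro t ht ⟨k, rfl⟩
  obtain ⟨k, rfl⟩ : ∃ j, k = j + 1 := ⟨k - 1, by omega⟩
  rw [show 2 * (k + 1) + 1 - 1 = 2 * k + 2 by omega, hitProb_self_eq_toReal hloc,
    hitProb_self_eq_toReal hloc]
  exact ENNReal.toReal_mono (ne_top_of_le_ne_top ENNReal.one_ne_top (returnWeight_le_one hloc v _))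
    (returnWeight_odd_le_even hloc v k)

/-- For odd `t ≥ 3`, `P_v(τ_v = t) ≤ P_v(τ_v = t - 1)`. -/
theorem odd_return_prob_le_even {V : Type} (G : SimpleGraph V) (hloc : LocFin G)
    (hconn : G.Connected) (hinf : Infinite V) (v : V) :
    ∀ t : ℕ, 3 ≤ t → Odd t → hitProb G v v t ≤ hitProb G v v (t - 1) :=
  odd_return_prob_le_even_general G hloc v

end RW
end

section
/- For the simple random walk on a locally finite graph, by reversibility: P_v(X_s = u, τ_v ≥ s) = (d_u / d_v) P_u(τ_v = s) for all vertices u ≠ v and integers s ≥ 1, and consequently P_v(τ_v = t) = (1/d_v) ∑_{u ≠ v} d_u P_u(τ_v = ⌈t/2⌉) P_u(τ_v = ⌊t/2⌋) for t ≥ 2. -/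
/-!
Reversing a path `x₀ … x_s` turns a path from `v` to `u` that avoids `v` in between into a
first-passage path from `u` to `v`, and changes its probability `∏_{i<s} 1/d(xᵢ)` into
`∏_{i≥1} 1/d(xᵢ)`, i.e. multiplies it by `d(x₀)/d(x_s)`; summing over paths gives the first
identity. A first-return path to `v` of length `t` is cut at time `⌈t/2⌉`, at the vertex `u ≠ v` it
occupies, into such a path `v → u` followed by a first-passage path `u → v`; summing over `u` and
reversing the first piece gives the second identity. Local finiteness makes every sum over paths
finite.
-/

open scoped BigOperators

namespace RW

attribute [local instance] Classical.propDecidable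

variable {V : Type*}

/-- `visitProb G v u s` is `P_v(X_s = u, τ_v ≥ s)`. -/
noncomputable def visitProb (G : SimpleGraph V) (v u : V) (s : ℕ) : ℝ :=
  ∑' p : Fin (s + 1) → V,
    if p 0 = v ∧ p (Fin.last s) = u ∧
        (∀ i : Fin (s + 1), i ≠ 0 → i ≠ Fin.last s → p i ≠ v)
    then pathProb G p else 0

def IsWalk (G : SimpleGraph V) {t : ℕ} (p : Fin (t + 1) → V) : Prop :=
  ∀ i : Fin t, G.Adj (p i.castSucc) (p i.succ)

/-- Contribution of `p` to the taboo probability `ᵥP^t(a, b)`; `hitProb G u v t` and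
`visitProb G v u t` are the sums of `tabooWeight G v u v` and `tabooWeight G v v u` over paths. -/
noncomputable def tabooWeight (G : SimpleGraph V) (v a b : V) {t : ℕ} (p : Fin (t + 1) → V) : ℝ :=
  if p 0 = a ∧ p (Fin.last t) = b ∧
      (∀ i : Fin (t + 1), i ≠ 0 → i ≠ Fin.last t → p i ≠ v)
  then pathProb G p else 0

section Walks

variable {G : SimpleGraph V}

lemma deg_pos (hloc : LocFin G) {x y : V} (h : G.Adj x y) : 0 < deg G x :=
  have : Finite (G.neighborSet x) := (hloc x).to_subtype
  have : Nonempty (G.neighborSet x) := ⟨⟨y, h⟩⟩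
  Nat.card_pos

lemma pathProb_of_isWalk {t : ℕ} {p : Fin (t + 1) → V} (hp : IsWalk G p) :
    pathProb G p = ∏ i : Fin t, ((deg G (p i.castSucc) : ℝ))⁻¹ :=
  if_pos hp

lemma pathProb_of_not_isWalk {t : ℕ} {p : Fin (t + 1) → V} (hp : ¬IsWalk G p) :
    pathProb G p = 0 :=
  if_neg hp

lemma endpoints_isWalk_of_tabooWeight_ne_zero {v a b : V} {t : ℕ} {p : Fin (t + 1) → V}
    (h : tabooWeight G v a b p ≠ 0) : p 0 = a ∧ p (Fin.last t) = b ∧ IsWalk G p := by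
  unfold tabooWeight at h
  split_ifs at h with hcond
  · exact ⟨hcond.1, hcond.2.1, by_contra fun hp => h (pathProb_of_not_isWalk hp)⟩
  · exact absurd rfl h

def ball (G : SimpleGraph V) (a : V) : ℕ → Set V
  | 0 => {a}
  | n + 1 => ball G a n ∪ ⋃ x ∈ ball G a n, G.neighborSet x

lemma ball_finite (hloc : LocFin G) (a : V) : ∀ n, (ball G a n).Finite
  | 0 => Set.finite_singleton a
  | n + 1 => (ball_finite hloc a n).union ((ball_finite hloc a n).biUnion fun x _ => hloc x)

lemma ball_mono (a : V) : Monotone (ball G a) :=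
  monotone_nat_of_le_succ fun _ => Set.subset_union_left

lemma mem_ball_succ_of_adj {a x y : V} {n : ℕ} (hx : x ∈ ball G a n) (h : G.Adj x y) :
    y ∈ ball G a (n + 1) :=
  Or.inr (Set.mem_biUnion hx h)

lemma IsWalk.mem_ball {t : ℕ} {p : Fin (t + 1) → V} (hp : IsWalk G p) (i : Fin (t + 1)) :
    p i ∈ ball G (p 0) t := by
  refine ball_mono (p 0) (Nat.lt_succ_iff.1 i.isLt) ?_
  induction i using Fin.induction with
  | zero => rfl
  | succ i ih => exact mem_ball_succ_of_adj ih (hp i)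

lemma finite_setOf_isWalk (hloc : LocFin G) (a : V) (t : ℕ) :
    {p : Fin (t + 1) → V | p 0 = a ∧ IsWalk G p}.Finite :=
  (Set.Finite.pi fun _ => ball_finite hloc a t).subset fun _ ⟨h0, hp⟩ i _ => h0 ▸ hp.mem_ball i

noncomputable def walkFinset (hloc : LocFin G) (a : V) (t : ℕ) : Finset (Fin (t + 1) → V) :=
  (finite_setOf_isWalk hloc a t).toFinset

lemma mem_walkFinset {hloc : LocFin G} {a : V} {t : ℕ} {p : Fin (t + 1) → V} :
    p ∈ walkFinset hloc a t ↔ p 0 = a ∧ IsWalk G p :=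
  Set.Finite.mem_toFinset _

lemma tsum_tabooWeight_eq_sum (hloc : LocFin G) (v a b : V) (t : ℕ) :
    ∑' p : Fin (t + 1) → V, tabooWeight G v a b p =
      ∑ p ∈ walkFinset hloc a t, tabooWeight G v a b p :=
  tsum_eq_sum fun _ hp => by_contra fun h => hp <| mem_walkFinset.2
    ⟨(endpoints_isWalk_of_tabooWeight_ne_zero h).1, (endpoints_isWalk_of_tabooWeight_ne_zero h).2.2⟩

end Walks

section Reversal

variable {G : SimpleGraph V}

lemma isWalk_comp_rev_iff {s : ℕ} {p : Fin (s + 1) → V} : IsWalk G (p ∘ Fin.rev) ↔ IsWalk G p :=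
  ⟨fun h i => by simpa [Fin.rev_castSucc, Fin.rev_succ] using (h i.rev).symm,
    fun h i => by simpa [Fin.rev_castSucc, Fin.rev_succ] using (h i.rev).symm⟩

lemma pathProb_comp_rev (hloc : LocFin G) {s : ℕ} (hs : 0 < s) (p : Fin (s + 1) → V) :
    pathProb G (p ∘ Fin.rev) = (deg G (p 0) / deg G (p (Fin.last s)) : ℝ) * pathProb G p := by
  by_cases hp : IsWalk G p
  swap
  · rw [pathProb_of_not_isWalk hp, pathProb_of_not_isWalk (mt isWalk_comp_rev_iff.1 hp), mul_zero]
  set f : Fin (s + 1) → ℝ := fun j => (deg G (p j) : ℝ)⁻¹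
  have hf0 : f 0 ≠ 0 := inv_ne_zero (Nat.cast_ne_zero.2 (deg_pos hloc (hp ⟨0, hs⟩)).ne')
  -- the reversed walk weighs the vertices `1, …, s` instead of `0, …, s - 1`
  have hends : f 0 * ∏ i : Fin s, f i.succ = (∏ i : Fin s, f i.castSucc) * f (Fin.last s) := by
    rw [← Fin.prod_univ_succ, Fin.prod_univ_castSucc]
  rw [pathProb_of_isWalk hp, pathProb_of_isWalk (isWalk_comp_rev_iff.2 hp)]
  calc ∏ i : Fin s, (deg G ((p ∘ Fin.rev) i.castSucc) : ℝ)⁻¹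
      = ∏ i : Fin s, f i.succ :=
        Fintype.prod_equiv Fin.revPerm _ _ fun i => by simp [f, Fin.rev_castSucc]
    _ = (f 0)⁻¹ * ((∏ i : Fin s, f i.castSucc) * f (Fin.last s)) := by
        rw [← hends, inv_mul_cancel_left₀ hf0]
    _ = _ := by simp only [f, inv_inv]; ring

lemma tabooWeight_comp_rev (hloc : LocFin G) {v a b : V} {s : ℕ} (hs : 0 < s)
    (p : Fin (s + 1) → V) :
    tabooWeight G v b a (p ∘ Fin.rev) = (deg G a / deg G b : ℝ) * tabooWeight G v a b p := by
  have hcond : ((p ∘ Fin.rev) 0 = b ∧ (p ∘ Fin.rev) (Fin.last s) = a ∧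
        ∀ i : Fin (s + 1), i ≠ 0 → i ≠ Fin.last s → (p ∘ Fin.rev) i ≠ v) ↔
      (p 0 = a ∧ p (Fin.last s) = b ∧ ∀ i : Fin (s + 1), i ≠ 0 → i ≠ Fin.last s → p i ≠ v) := by
    simp only [Function.comp_apply, Fin.rev_zero, Fin.rev_last]
    have hrev : ∀ i : Fin (s + 1), i ≠ 0 → i ≠ Fin.last s → i.rev ≠ 0 ∧ i.rev ≠ Fin.last s :=
      fun i hi0 hil => by simpa [Fin.rev_eq_iff, and_comm] using And.intro hi0 hil
    constructor
    · rintro ⟨hb, ha, hv⟩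
      exact ⟨ha, hb, fun i hi0 hil => by simpa using hv i.rev (hrev i hi0 hil).1 (hrev i hi0 hil).2⟩
    · rintro ⟨ha, hb, hv⟩
      exact ⟨hb, ha, fun i hi0 hil => hv i.rev (hrev i hi0 hil).1 (hrev i hi0 hil).2⟩
  unfold tabooWeight
  rw [if_congr hcond rfl rfl]
  split_ifs with h
  · rw [pathProb_comp_rev hloc hs, h.1, h.2.1]
  · rw [mul_zero]

lemma visitProb_eq_mul_hitProb (hloc : LocFin G) (v u : V) {s : ℕ} (hs : 0 < s) :
    visitProb G v u s = (deg G u / deg G v : ℝ) * hitProb G u v s := by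
  let e : Equiv.Perm (Fin (s + 1) → V) :=
    Function.Involutive.toPerm (· ∘ Fin.rev) fun p => funext fun i => congrArg p (Fin.rev_rev i)
  calc visitProb G v u s = ∑' p, tabooWeight G v v u (e p) := (e.tsum_eq _).symm
    _ = _ := by rw [hitProb, ← tsum_mul_left]; exact tsum_congr (tabooWeight_comp_rev hloc hs)

end Reversal

section Splitting

variable {m n : ℕ}

def pathPrefix (m n : ℕ) (p : Fin (m + n + 1) → V) : Fin (m + 1) → V :=
  fun i => p ⟨i, by omega⟩

def pathSuffix (m n : ℕ) (p : Fin (m + n + 1) → V) : Fin (n + 1) → V :=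
  fun j => p ⟨m + j, by omega⟩

def pathAppend (q : Fin (m + 1) → V) (r : Fin (n + 1) → V) : Fin (m + n + 1) → V :=
  fun i => if h : (i : ℕ) ≤ m then q ⟨i, by omega⟩ else r ⟨i - m, by omega⟩

@[simp] lemma pathPrefix_zero (p : Fin (m + n + 1) → V) : pathPrefix m n p 0 = p 0 :=
  congrArg p (Fin.ext (by simp))

@[simp] lemma pathPrefix_last (p : Fin (m + n + 1) → V) :
    pathPrefix m n p (Fin.last m) = p ⟨m, by omega⟩ :=
  rfl

@[simp] lemma pathSuffix_zero (p : Fin (m + n + 1) → V) :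
    pathSuffix m n p 0 = p ⟨m, by omega⟩ :=
  congrArg p (Fin.ext (by simp))

@[simp] lemma pathSuffix_last (p : Fin (m + n + 1) → V) :
    pathSuffix m n p (Fin.last n) = p (Fin.last (m + n)) :=
  rfl

lemma pathPrefix_append (q : Fin (m + 1) → V) (r : Fin (n + 1) → V) :
    pathPrefix m n (pathAppend q r) = q :=
  funext fun i => dif_pos (Nat.lt_succ_iff.1 i.isLt)

lemma pathSuffix_append {q : Fin (m + 1) → V} {r : Fin (n + 1) → V}
    (h : r 0 = q (Fin.last m)) : pathSuffix m n (pathAppend q r) = r := by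
  funext j
  by_cases hj : (j : ℕ) = 0
  · rw [show j = 0 from Fin.ext hj, h]
    exact dif_pos (by simp)
  · simp only [pathSuffix, pathAppend]
    rw [dif_neg (by omega)]
    exact congrArg r (Fin.ext (by simp))

lemma pathAppend_prefix_suffix (p : Fin (m + n + 1) → V) :
    pathAppend (pathPrefix m n p) (pathSuffix m n p) = p := by
  funext i
  unfold pathAppend
  split_ifs
  · rfl
  · exact congrArg p (Fin.ext (by simp; omega))

variable {G : SimpleGraph V}

lemma isWalk_iff_prefix_suffix {p : Fin (m + n + 1) → V} :
    IsWalk G p ↔ IsWalk G (pathPrefix m n p) ∧ IsWalk G (pathSuffix m n p) := by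
  refine ⟨fun h => ⟨fun i => h (Fin.castAdd n i), fun j => h (Fin.natAdd m j)⟩, ?_⟩
  rintro ⟨hq, hr⟩ i
  induction i using Fin.addCases with
  | left i => exact hq i
  | right j => exact hr j

lemma pathProb_eq_prefix_mul_suffix (p : Fin (m + n + 1) → V) :
    pathProb G p = pathProb G (pathPrefix m n p) * pathProb G (pathSuffix m n p) := by
  by_cases hp : IsWalk G p
  · obtain ⟨hq, hr⟩ := isWalk_iff_prefix_suffix.1 hp
    rw [pathProb_of_isWalk hp, pathProb_of_isWalk hq, pathProb_of_isWalk hr, Fin.prod_univ_add]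
    rfl
  · rw [pathProb_of_not_isWalk hp]
    rcases not_and_or.1 (mt isWalk_iff_prefix_suffix.2 hp) with h | h
    · rw [pathProb_of_not_isWalk h, zero_mul]
    · rw [pathProb_of_not_isWalk h, mul_zero]

lemma avoids_iff_prefix_suffix (hm : 0 < m) (hn : 0 < n) (v : V) (p : Fin (m + n + 1) → V) :
    (∀ i : Fin (m + n + 1), i ≠ 0 → i ≠ Fin.last (m + n) → p i ≠ v) ↔
      (∀ i : Fin (m + 1), i ≠ 0 → i ≠ Fin.last m → pathPrefix m n p i ≠ v) ∧
      p ⟨m, by omega⟩ ≠ v ∧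
      (∀ j : Fin (n + 1), j ≠ 0 → j ≠ Fin.last n → pathSuffix m n p j ≠ v) := by
  simp only [ne_eq, Fin.ext_iff, Fin.val_zero, Fin.val_last]
  constructor
  · intro h
    exact ⟨fun i hi0 hil => h _ hi0 (by simp; omega), h _ (by simp; omega) (by simp; omega),
      fun j hj0 hjl => h _ (by simp; omega) (by simp; omega)⟩
  · rintro ⟨hq, hmid, hr⟩ i hi0 hil
    rcases lt_trichotomy (i : ℕ) m with hi | hi | hi
    · exact hq ⟨i, by omega⟩ hi0 (by simp; omega)
    · exact (Fin.ext hi : i = ⟨m, by omega⟩) ▸ hmid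
    · have hi' : (⟨m + (i - m), by omega⟩ : Fin (m + n + 1)) = i := Fin.ext (by simp; omega)
      exact hi' ▸ hr ⟨i - m, by omega⟩ (by simp; omega) (by simp; omega)

lemma tabooWeight_eq_tsum_split (hm : 0 < m) (hn : 0 < n) (v : V) (p : Fin (m + n + 1) → V) :
    tabooWeight G v v v p = ∑' u, if u = v then 0 else
      tabooWeight G v v u (pathPrefix m n p) * tabooWeight G v u v (pathSuffix m n p) := by
  rw [tsum_eq_single (p ⟨m, by omega⟩)]
  · unfold tabooWeight
    rw [ite_zero_mul_ite_zero, ← pathProb_eq_prefix_mul_suffix]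
    simp only [avoids_iff_prefix_suffix hm hn, pathPrefix_zero, pathPrefix_last, pathSuffix_zero,
      pathSuffix_last]
    split_ifs <;> tauto
  · intro u hu
    split_ifs
    · rfl
    · rw [tabooWeight, if_neg fun h => hu (by simpa using h.2.1.symm), zero_mul]

lemma sum_walkFinset_split {M : Type*} [AddCommMonoid M] (hloc : LocFin G) (a b : V)
    (g : (Fin (m + 1) → V) → (Fin (n + 1) → V) → M)
    (hg : ∀ q r, g q r ≠ 0 → q (Fin.last m) = b ∧ r 0 = b) :
    ∑ p ∈ walkFinset hloc a (m + n), g (pathPrefix m n p) (pathSuffix m n p) =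
      ∑ q ∈ walkFinset hloc a m, ∑ r ∈ walkFinset hloc b n, g q r := by
  rw [← Finset.sum_product']
  refine Finset.sum_bij_ne_zero (fun p _ _ => (pathPrefix m n p, pathSuffix m n p))
    ?_ ?_ ?_ fun _ _ _ => rfl
  · intro p hp hgp
    obtain ⟨hp0, hpw⟩ := mem_walkFinset.1 hp
    obtain ⟨hqw, hrw⟩ := isWalk_iff_prefix_suffix.1 hpw
    exact Finset.mem_product.2 ⟨mem_walkFinset.2 ⟨(pathPrefix_zero p).trans hp0, hqw⟩,
      mem_walkFinset.2 ⟨(hg _ _ hgp).2, hrw⟩⟩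
  · intro p _ _ p' _ _ h
    rw [← pathAppend_prefix_suffix p, ← pathAppend_prefix_suffix p', (Prod.mk.inj h).1,
      (Prod.mk.inj h).2]
  · rintro ⟨q, r⟩ hqr hgqr
    obtain ⟨hq, hr⟩ := Finset.mem_product.1 hqr
    obtain ⟨hqb, hrb⟩ := hg q r hgqr
    have hprefix := pathPrefix_append q r
    have hsuffix := pathSuffix_append (hrb.trans hqb.symm)
    refine ⟨pathAppend q r, mem_walkFinset.2 ⟨?_, ?_⟩, by rwa [hprefix, hsuffix], by
      rw [hprefix, hsuffix]⟩
    · have h0 := pathPrefix_zero (n := n) (pathAppend q r)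
      rw [hprefix] at h0
      exact h0 ▸ (mem_walkFinset.1 hq).1
    · rw [isWalk_iff_prefix_suffix, hprefix, hsuffix]
      exact ⟨(mem_walkFinset.1 hq).2, (mem_walkFinset.1 hr).2⟩

lemma hitProb_add (hloc : LocFin G) (v : V) (hm : 0 < m) (hn : 0 < n) :
    hitProb G v v (m + n) =
      ∑' u, if u = v then 0 else visitProb G v u m * hitProb G u v n := by
  have hsplit : ∀ u (q : Fin (m + 1) → V) (r : Fin (n + 1) → V),
      tabooWeight G v v u q * tabooWeight G v u v r ≠ 0 → q (Fin.last m) = u ∧ r 0 = u :=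
    fun u q r h =>
    ⟨(endpoints_isWalk_of_tabooWeight_ne_zero (left_ne_zero_of_mul h)).2.1,
      (endpoints_isWalk_of_tabooWeight_ne_zero (right_ne_zero_of_mul h)).1⟩
  calc hitProb G v v (m + n)
      = ∑ p ∈ walkFinset hloc v (m + n), tabooWeight G v v v p :=
        tsum_tabooWeight_eq_sum hloc v v v (m + n)
    _ = ∑ p ∈ walkFinset hloc v (m + n), ∑' u, if u = v then 0 else
          tabooWeight G v v u (pathPrefix m n p) * tabooWeight G v u v (pathSuffix m n p) :=
        Finset.sum_congr rfl fun p _ => tabooWeight_eq_tsum_split hm hn v p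
    _ = ∑' u, ∑ p ∈ walkFinset hloc v (m + n), if u = v then 0 else
          tabooWeight G v v u (pathPrefix m n p) * tabooWeight G v u v (pathSuffix m n p) := by
        refine (Summable.tsum_finsetSum fun p _ => summable_of_ne_finset_zero
          (s := {p ⟨m, by omega⟩}) fun u hu => ?_).symm
        split_ifs
        · rfl
        · by_contra h
          exact hu (Finset.mem_singleton.2 (hsplit u _ _ h).1.symm)
    _ = _ := by
        refine tsum_congr fun u => ?_
        rw [Finset.sum_ite_irrel, Finset.sum_const_zero]
        split_ifs
        · rfl
        · refine (sum_walkFinset_split hloc v u (fun q r => _) (hsplit u)).trans ?_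
          rw [← Finset.sum_mul_sum, ← tsum_tabooWeight_eq_sum hloc v v u,
            ← tsum_tabooWeight_eq_sum hloc v u v]
          rfl

end Splitting

theorem reversibility_return_identity_general {V : Type} (G : SimpleGraph V) (hloc : LocFin G)
    (v : V) :
    (∀ u : V, u ≠ v → ∀ s : ℕ, 1 ≤ s →
        visitProb G v u s = ((deg G u : ℝ) / (deg G v : ℝ)) * hitProb G u v s) ∧
    (∀ t : ℕ, 2 ≤ t →
        hitProb G v v t = ((deg G v : ℝ))⁻¹ *
          ∑' u : V, (if u = v then 0 else
            (deg G u : ℝ) * hitProb G u v ((t + 1) / 2) * hitProb G u v (t / 2))) := by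
  refine ⟨fun u _ s hs => visitProb_eq_mul_hitProb hloc v u hs, fun t ht => ?_⟩
  have hhalves : (t + 1) / 2 + t / 2 = t := by omega
  calc hitProb G v v t = hitProb G v v ((t + 1) / 2 + t / 2) := by rw [hhalves]
    _ = ∑' u, if u = v then 0 else
          visitProb G v u ((t + 1) / 2) * hitProb G u v (t / 2) :=
        hitProb_add hloc v (by omega) (by omega)
    _ = _ := by
        rw [← tsum_mul_left]
        refine tsum_congr fun u => ?_
        split_ifs
        · rw [mul_zero]
        · rw [visitProb_eq_mul_hitProb hloc v u (by omega)]
          ring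

/-- Reversibility: `P_v(X_s = u, τ_v ≥ s) = (d_u/d_v) P_u(τ_v = s)`, and consequently
`P_v(τ_v = t) = (1/d_v) ∑_{u ≠ v} d_u P_u(τ_v = ⌈t/2⌉) P_u(τ_v = ⌊t/2⌋)`. -/
theorem reversibility_return_identity {V : Type} (G : SimpleGraph V) (hloc : LocFin G)
    (hconn : G.Connected) (v : V) :
    (∀ u : V, u ≠ v → ∀ s : ℕ, 1 ≤ s →
        visitProb G v u s = ((deg G u : ℝ) / (deg G v : ℝ)) * hitProb G u v s) ∧
    (∀ t : ℕ, 2 ≤ t →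
        hitProb G v v t = ((deg G v : ℝ))⁻¹ *
          ∑' u : V, (if u = v then 0 else
            (deg G u : ℝ) * hitProb G u v ((t + 1) / 2) * hitProb G u v (t / 2))) :=
  reversibility_return_identity_general G hloc v

end RW
end
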